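/- A normal cubic surface in ℙ³ over an algebraically closed field has at most 4 singular points. -/

import Mathlib

/-
Five singular points `p₀, …, p₄` of an irreducible cubic surface with finitely many singular
points are in general position, and this is absurd.

* No three are collinear: a cubic vanishes on the line through two of its singular points, and if a
  third point of that line is singular, each partial derivative restricted to the line is a binary
  quadratic with three zeros, hence zero. The whole line would be singular.
* No four are coplanar: taking three of them as coordinate points `e₁, e₂, e₃`, every monomial of
  the cubic is squarefree in `x₁, x₂, x₃`, so on the plane `x₀ = 0` it reduces to `c x₁x₂x₃`;
  vanishing at the fourth point forces `c = 0`, i.e. `x₀` divides the cubic.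
* Five points in general position: the line through `p₀` and `p₄` lies on the surface and meets
  the plane of `p₁, p₂, p₃` in a point which, with these three, violates the previous step.
-/

open MvPolynomial Finsupp Finset
open scoped Matrix

theorem Finsupp.eq_single_of_degree_le {σ : Type*} {d : σ →₀ ℕ} {k : σ} (h : d.degree ≤ d k) :
    d = single k (d k) := by
  have hdeg := congrArg degree (single_add_erase k d)
  rw [map_add, degree_single] at hdeg
  have herase : d.erase k = 0 := (degree_eq_zero_iff _).1 (by omega)
  conv_lhs => rw [← single_add_erase k d, herase, add_zero]

theorem Matrix.vecMul_of {ι σ R : Type*} [Fintype ι] [Semiring R] (x : ι → R)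
    (r : ι → σ → R) : x ᵥ* Matrix.of r = ∑ i, x i • r i :=
  Matrix.vecMul_eq_sum x _

section LinearAlgebra

variable {K V : Type*} [Field K] [AddCommGroup V] [Module K V]

theorem LinearIndependent.not_forall_exists_mem_smul [Infinite K] {r : Fin 2 → V}
    (hr : LinearIndependent K r) (S : Finset V) :
    ¬ ∀ s : K, ∃ w ∈ S, ∃ c : K, r 0 + s • r 1 = c • w := by
  intro h
  choose w hwS c hc using h
  have hli := Fintype.linearIndependent_iff.1 hr
  refine not_injective_infinite_finite (fun s => (⟨w s, hwS s⟩ : S)) fun s t hst => ?_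
  have hw : w s = w t := congrArg Subtype.val hst
  have hcs : c s ≠ 0 := fun h0 => by
    have := hli ![1, s] (by simpa [Fin.sum_univ_two, h0] using hc s) 0
    simp at this
  have key := hli ![c t - c s, c t * s - c s * t] (by
    simp only [Fin.sum_univ_two, Matrix.cons_val_zero, Matrix.cons_val_one]
    have : c t • (r 0 + s • r 1) = c s • (r 0 + t • r 1) := by
      rw [hc s, hc t, hw, smul_smul, smul_smul, mul_comm]
    linear_combination (norm := module) this)
  have h0 := key 0
  have h1 := key 1
  simp only [Matrix.cons_val_zero, Matrix.cons_val_one, sub_eq_zero] at h0 h1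
  rw [h0] at h1
  exact mul_left_cancel₀ hcs h1

theorem exists_forall_ne_zero_eq_sum_smul {n : ℕ} {u : Fin (n + 1) → V}
    (hsub : ∀ g : Fin n → Fin (n + 1), Function.Injective g → LinearIndependent K (u ∘ g))
    (hu : ¬ LinearIndependent K u) :
    ∃ c : Fin n → K, (∀ i, c i ≠ 0) ∧ u (Fin.last n) = ∑ i, c i • u (Fin.castSucc i) := by
  have hmem : u (Fin.last n) ∈ Submodule.span K (Set.range (Fin.init u)) := by
    by_contra h
    exact hu (Fin.snoc_init_self u ▸
      linearIndependent_finSnoc.2 ⟨hsub _ (Fin.castSucc_injective n), h⟩)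
  obtain ⟨c, hc⟩ := (Submodule.mem_span_range_iff_exists_fun K).1 hmem
  refine ⟨c, fun l hl => ?_, hc.symm⟩
  -- replacing `u (castSucc l)` by `u (last n)` would give a dependent proper subfamily
  set g := Function.update Fin.castSucc l (Fin.last n)
  have hg : Function.Injective g := by
    intro a b hab
    by_cases ha : a = l <;> by_cases hb : b = l <;>
      simp_all [g, Fin.castSucc_ne_last, (Fin.castSucc_ne_last _).symm]
  refine linearIndependent_iff_notMem_span.1 (hsub g hg) l ?_
  rw [Function.comp_apply, show g l = Fin.last n from Function.update_self .., ← hc]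
  refine Submodule.sum_mem _ fun i _ => ?_
  by_cases hi : i = l
  · rw [hi, hl, zero_smul]
    exact Submodule.zero_mem _
  · exact Submodule.smul_mem _ _
      (Submodule.subset_span ⟨i, by simp [hi], by simp [g, hi, Fin.init]⟩)

end LinearAlgebra

namespace MvPolynomial

variable {σ R : Type*} [CommRing R] {G : MvPolynomial σ R} {n : ℕ}

def IsSingularPoint (F : MvPolynomial σ R) (v : σ → R) : Prop :=
  eval v F = 0 ∧ ∀ i, eval v (pderiv i F) = 0

theorem IsHomogeneous.degree_eq_of_coeff_ne_zero (hG : G.IsHomogeneous n) {d : σ →₀ ℕ}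
    (hd : coeff d G ≠ 0) : d.degree = n := by
  rw [degree_eq_weight_one]
  exact hG hd

theorem IsHomogeneous.eval_piSingle_one [DecidableEq σ] (hG : G.IsHomogeneous n) (k : σ) :
    eval (Pi.single k 1) G = coeff (single k n) G := by
  rw [eval_eq, Finset.sum_eq_single (single k n)]
  · rw [prod_eq_one, mul_one]
    intro i hi
    rw [mem_singleton.1 (support_single_subset hi), Pi.single_eq_same, one_pow]
  · intro d hd hne
    obtain ⟨i, hi, hik⟩ : ∃ i ∈ d.support, i ≠ k := by
      by_contra! h
      have hsingle : d = single k (d k) :=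
        support_subset_singleton.1 fun i hi => mem_singleton.2 (h i hi)
      have hdk : d k = n := by
        rw [← hG.degree_eq_of_coeff_ne_zero (mem_support_iff.1 hd), hsingle, degree_single,
          single_eq_same]
      exact hne (hsingle.trans (by rw [hdk]))
    rw [prod_eq_zero hi (by rw [Pi.single_eq_of_ne hik, zero_pow (Finsupp.mem_support_iff.1 hi)]),
      mul_zero]
  · intro h
    rw [notMem_support_iff.1 h, zero_mul]

theorem IsHomogeneous.coeff_eq_zero_of_eval_piSingle_eq_zero [DecidableEq σ]
    (hG : G.IsHomogeneous n) {k : σ} (h : eval (Pi.single k 1) G = 0) {d : σ →₀ ℕ}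
    (hd : n ≤ d k) : coeff d G = 0 := by
  by_contra hc
  have hdeg := hG.degree_eq_of_coeff_ne_zero hc
  have hsingle := eq_single_of_degree_le (hdeg.trans_le hd)
  have hdk : d k = n := by rw [← hdeg, hsingle, degree_single, single_eq_same]
  rw [hsingle, hdk, ← hG.eval_piSingle_one] at hc
  exact hc h

theorem IsHomogeneous.coeff_eq_zero_of_isSingularPoint_piSingle [DecidableEq σ]
    (hG : G.IsHomogeneous n) {k : σ} (h : IsSingularPoint G (Pi.single k 1)) {d : σ →₀ ℕ}
    (hd : n ≤ d k + 1) : coeff d G = 0 := by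
  by_cases hnk : n ≤ d k
  · exact hG.coeff_eq_zero_of_eval_piSingle_eq_zero h.1 hnk
  by_contra hc
  have hdeg := hG.degree_eq_of_coeff_ne_zero hc
  obtain ⟨j, hj⟩ := Finsupp.ne_iff.1 fun hsingle : d = single k (d k) => by
    rw [hsingle, degree_single] at hdeg
    omega
  have hjk : j ≠ k := by rintro rfl; simp at hj
  rw [single_eq_of_ne hjk] at hj
  -- `d = (n - 1) eₖ + eⱼ`, so `coeff d G` is the coefficient of `xₖ ^ (n - 1)` in `∂ⱼ G`,
  -- which is `(∂ⱼ G) (eₖ) = 0`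
  set e := d - single j 1
  have hde : e + single j 1 = d := tsub_add_cancel_of_le (single_le_iff.2 (by omega))
  have hek : e k = d k := by simp [e, single_eq_of_ne hjk.symm]
  have hedeg : e.degree = n - 1 := by
    rw [← hdeg, ← hde, map_add, degree_single]
    omega
  have hej : e j = 0 := by
    rw [eq_single_of_degree_le (by omega : e.degree ≤ e k), single_eq_of_ne hjk]
  have hcoeff := hG.pderiv.coeff_eq_zero_of_eval_piSingle_eq_zero (h.2 j) (d := e) (by omega)
  rw [coeff_pderiv, hde, hej, Nat.cast_zero, zero_add, mul_one] at hcoeff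
  exact hc hcoeff

/-- The only monomial of `G` that can survive at `z` is the product of the coordinates in `T`. -/
theorem IsHomogeneous.exists_eq_zero_ne_zero_of_eval_eq_zero [Fintype σ] [IsDomain R]
    (hG : G.IsHomogeneous n) {z : σ → R} {T : Finset σ} (hT : ∀ k, k ∈ T ↔ z k ≠ 0)
    (hcard : #T = n) (hsq : ∀ d, coeff d G ≠ 0 → ∀ k ∈ T, d k ≤ 1) (hz : eval z G = 0)
    {d : σ →₀ ℕ} (hd : coeff d G ≠ 0) : ∃ k, z k = 0 ∧ d k ≠ 0 := by
  by_contra! hd0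
  have hind : ∀ d', coeff d' G ≠ 0 → (∀ k, z k = 0 → d' k = 0) → ∀ k, z k ≠ 0 → d' k = 1 := by
    intro d' hd' h0
    have hsum : ∑ k ∈ T, d' k = ∑ k ∈ T, 1 := by
      rw [sum_const, smul_eq_mul, mul_one, hcard, ← hG.degree_eq_of_coeff_ne_zero hd',
        degree_eq_sum]
      exact sum_subset (subset_univ T) fun k _ hk => h0 k (by simpa [hT] using hk)
    exact fun k hk => (sum_eq_sum_iff_of_le (hsq d' hd')).1 hsum k ((hT k).2 hk)
  have heval : eval z G = coeff d G * ∏ k, z k ^ d k := by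
    rw [eval_eq', Finset.sum_eq_single d]
    · intro d' hd' hne
      obtain ⟨k, hk, hk'⟩ : ∃ k, z k = 0 ∧ d' k ≠ 0 := by
        by_contra! h
        refine hne (Finsupp.ext fun k => ?_)
        by_cases hk : z k = 0
        · rw [h k hk, hd0 k hk]
        · rw [hind d' (mem_support_iff.1 hd') h k hk, hind d hd hd0 k hk]
      rw [prod_eq_zero (mem_univ k) (by rw [hk, zero_pow hk']), mul_zero]
    · intro h
      exact absurd (mem_support_iff.2 hd) h
  have hprod : ∏ k, z k ^ d k ≠ 0 := prod_ne_zero_iff.2 fun k _ => by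
    by_cases hk : z k = 0
    · rw [hd0 k hk, pow_zero]
      exact one_ne_zero
    · exact pow_ne_zero _ hk
  exact mul_ne_zero hd hprod (heval ▸ hz)

theorem X_dvd_of_forall_coeff_ne_zero {i : σ} (h : ∀ d, coeff d G ≠ 0 → d i ≠ 0) :
    X i ∣ G := by
  rw [X_dvd_iff_modMonomial_eq_zero]
  ext d
  rw [coeff_zero]
  by_cases hle : single i 1 ≤ d
  · exact coeff_modMonomial_of_le _ hle
  · rw [coeff_modMonomial_of_not_le _ hle]
    by_contra hc
    exact hle (single_le_iff.2 (Nat.one_le_iff_ne_zero.2 (h d hc)))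

theorem IsHomogeneous.X_dvd_of_eval_eq_zero [Fintype σ] [DecidableEq σ] [IsDomain R]
    (hG : G.IsHomogeneous (Fintype.card σ - 1)) {l : σ}
    (hsq : ∀ d, coeff d G ≠ 0 → ∀ k ≠ l, d k ≤ 1) {z : σ → R} (hzl : z l = 0)
    (hz : ∀ k ≠ l, z k ≠ 0) (hG0 : eval z G = 0) : X l ∣ G := by
  refine X_dvd_of_forall_coeff_ne_zero fun d hd => ?_
  have hT : ∀ k, k ∈ univ.erase l ↔ z k ≠ 0 := fun k => by
    rw [mem_erase]
    exact ⟨fun h => hz k h.1, fun h => ⟨fun hk => h (hk ▸ hzl), mem_univ k⟩⟩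
  obtain ⟨k, hk, hdk⟩ := hG.exists_eq_zero_ne_zero_of_eval_eq_zero hT
    (by rw [card_erase_of_mem (mem_univ l), card_univ])
    (fun d hd k hk => hsq d hd k (ne_of_mem_erase hk)) hG0 hd
  obtain rfl : k = l := by_contra fun h => hz k h hk
  exact hdk

theorem IsHomogeneous.not_X_dvd_of_irreducible [IsDomain R] (hG : G.IsHomogeneous n)
    (hn : n ≠ 1) (hirr : Irreducible G) (i : σ) : ¬ X i ∣ G := by
  intro hdvd
  obtain ⟨u, hu⟩ := X_prime.irreducible.associated_of_dvd hirr hdvd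
  have hu0 : (u : MvPolynomial σ R).IsHomogeneous 0 :=
    (totalDegree_zero_iff_isHomogeneous σ).1 (isUnit_iff_totalDegree_of_isReduced.1 u.isUnit).2
  exact hn (hG.inj_right (hu ▸ (isHomogeneous_X R i).mul hu0) hirr.ne_zero)

section LinearSubstitution

variable {ι τ : Type*} [Fintype ι] [Fintype τ]

/-- `linSubst M F` is the polynomial `x ↦ F (x ᵥ* M)`. -/
noncomputable def linSubst (M : Matrix ι σ R) : MvPolynomial σ R →ₐ[R] MvPolynomial ι R :=
  aeval fun i => ∑ k, C (M k i) * X k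

theorem eval_linSubst (M : Matrix ι σ R) (F : MvPolynomial σ R) (x : ι → R) :
    eval x (linSubst M F) = eval (x ᵥ* M) F := by
  induction F using MvPolynomial.induction_on with
  | C a => simp
  | add p q hp hq => simp [hp, hq]
  | mul_X p i hp =>
    rw [map_mul, map_mul, hp, map_mul, eval_X]
    simp [linSubst, Matrix.vecMul, dotProduct, mul_comm]

theorem IsHomogeneous.linSubst {F : MvPolynomial σ R} (hF : F.IsHomogeneous n)
    (M : Matrix ι σ R) : (MvPolynomial.linSubst M F).IsHomogeneous n := by
  have h := hF.aeval (fun i => ∑ k, C (M k i) * X k) fun i =>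
    IsHomogeneous.sum _ _ _ fun k _ => isHomogeneous_C_mul_X (M k i) k
  rwa [one_mul] at h

theorem pderiv_linSubst [Fintype σ] (M : Matrix ι σ R) (F : MvPolynomial σ R) (j : ι) :
    pderiv j (linSubst M F) = ∑ i, C (M j i) * linSubst M (pderiv i F) := by
  classical
  induction F using MvPolynomial.induction_on with
  | C a => simp [linSubst]
  | add p q hp hq => simp [hp, hq, mul_add, sum_add_distrib]
  | mul_X p i hp =>
    have hLX : pderiv j (linSubst M (X i)) = C (M j i) := by
      simp [linSubst, pderiv_X, Pi.single_apply]
    rw [map_mul, pderiv_mul, hp, hLX]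
    simp only [pderiv_mul, map_add, map_mul, mul_add, sum_add_distrib, Finset.sum_mul]
    congr 1
    · exact sum_congr rfl fun _ _ => mul_assoc _ _ _
    · simp [pderiv_X, Pi.single_apply, mul_comm]

theorem IsSingularPoint.linSubst [Fintype σ] {F : MvPolynomial σ R} {M : Matrix ι σ R}
    {x : ι → R} (h : IsSingularPoint F (x ᵥ* M)) : IsSingularPoint (linSubst M F) x := by
  refine ⟨by rw [eval_linSubst]; exact h.1, fun j => ?_⟩
  rw [pderiv_linSubst, map_sum]
  exact sum_eq_zero fun i _ => by rw [map_mul, eval_linSubst, h.2 i, mul_zero]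

theorem linSubst_comp (M : Matrix ι τ R) (N : Matrix τ σ R) :
    (linSubst M).comp (linSubst N) = linSubst (M * N) := by
  ext i : 1
  simp only [linSubst, aeval_eq_bind₁, AlgHom.coe_comp, Function.comp_apply, bind₁_X_right,
    map_sum, map_mul, algHom_C, algebraMap_eq, Finset.mul_sum, Matrix.mul_apply, Finset.sum_mul]
  rw [Finset.sum_comm]
  exact sum_congr rfl fun _ _ => sum_congr rfl fun _ _ => by ring

theorem linSubst_one [DecidableEq σ] [Fintype σ] :
    linSubst (1 : Matrix σ σ R) = AlgHom.id R _ := by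
  ext i : 1
  simp [linSubst, Matrix.one_apply]

theorem irreducible_linSubst [DecidableEq σ] [Fintype σ] {F : MvPolynomial σ R}
    (hF : Irreducible F) {M : Matrix σ σ R} (hM : IsUnit M) : Irreducible (linSubst M F) := by
  let e : MvPolynomial σ R ≃ₐ[R] MvPolynomial σ R :=
    AlgEquiv.ofAlgHom (linSubst M) (linSubst ↑hM.unit⁻¹)
      (by rw [linSubst_comp, hM.mul_val_inv, linSubst_one])
      (by rw [linSubst_comp, hM.val_inv_mul, linSubst_one])
  exact (MulEquiv.irreducible_iff (e : MvPolynomial σ R ≃* MvPolynomial σ R)).2 hF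

end LinearSubstitution

theorem eq_zero_of_isHomogeneous_three_of_isSingularPoint {G : MvPolynomial (Fin 2) R}
    (hG : G.IsHomogeneous 3) (h : ∀ k, IsSingularPoint G (Pi.single k 1)) : G = 0 := by
  ext d
  rw [coeff_zero]
  by_contra hc
  have hdeg := hG.degree_eq_of_coeff_ne_zero hc
  rw [degree_eq_sum, Fin.sum_univ_two] at hdeg
  obtain ⟨k, hk⟩ : ∃ k, 2 ≤ d k := by
    by_contra! hlt
    have := hlt 0
    have := hlt 1
    omega
  exact hc (hG.coeff_eq_zero_of_isSingularPoint_piSingle (h k) (by omega))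

theorem eq_zero_of_isHomogeneous_two_of_eval_eq_zero [IsDomain R] {H : MvPolynomial (Fin 2) R}
    (hH : H.IsHomogeneous 2) (h : ∀ k, eval (Pi.single k 1) H = 0) {z : Fin 2 → R}
    (hz : ∀ k, z k ≠ 0) (hHz : eval z H = 0) : H = 0 := by
  ext d
  rw [coeff_zero]
  by_contra hc
  obtain ⟨k, hk, -⟩ := hH.exists_eq_zero_ne_zero_of_eval_eq_zero (T := univ)
    (fun k => by simp [hz k]) rfl
    (fun d hd k _ => by
      by_contra hk
      exact hd (hH.coeff_eq_zero_of_eval_piSingle_eq_zero (h k) (by omega)))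
    hHz hc
  exact hz k hk

section Lines

variable {K : Type*} [Field K] [Fintype σ] {F : MvPolynomial σ K}

theorem eval_sum_smul_eq_zero (hF : F.IsHomogeneous 3) {r : Fin 2 → σ → K}
    (hr : ∀ i, IsSingularPoint F (r i)) (z : Fin 2 → K) : eval (∑ i, z i • r i) F = 0 := by
  have hG : linSubst (Matrix.of r) F = 0 :=
    eq_zero_of_isHomogeneous_three_of_isSingularPoint (hF.linSubst _) fun k =>
      IsSingularPoint.linSubst (by rw [Matrix.single_one_vecMul]; exact hr k)
  rw [← Matrix.vecMul_of, ← eval_linSubst, hG, map_zero]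

theorem isSingularPoint_sum_smul (hF : F.IsHomogeneous 3) {r : Fin 2 → σ → K}
    (hr : ∀ i, IsSingularPoint F (r i)) {c : Fin 2 → K} (hc : ∀ i, c i ≠ 0)
    (hsing : IsSingularPoint F (∑ i, c i • r i)) (z : Fin 2 → K) :
    IsSingularPoint F (∑ i, z i • r i) := by
  refine ⟨eval_sum_smul_eq_zero hF hr z, fun j => ?_⟩
  have hH : linSubst (Matrix.of r) (pderiv j F) = 0 :=
    eq_zero_of_isHomogeneous_two_of_eval_eq_zero (hF.pderiv.linSubst _)
      (fun k => by rw [eval_linSubst, Matrix.single_one_vecMul]; exact (hr k).2 j) hc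
      (by rw [eval_linSubst, Matrix.vecMul_of]; exact hsing.2 j)
  rw [← Matrix.vecMul_of, ← eval_linSubst, hH, map_zero]

theorem not_isSingularPoint_sum_smul [Infinite K] (hF : F.IsHomogeneous 3) {S : Finset (σ → K)}
    (hS : ∀ v, v ≠ 0 → IsSingularPoint F v → ∃ w ∈ S, ∃ c : K, v = c • w)
    {r : Fin 2 → σ → K} (hr : LinearIndependent K r) (hrs : ∀ i, IsSingularPoint F (r i))
    {c : Fin 2 → K} (hc : ∀ i, c i ≠ 0) : ¬ IsSingularPoint F (∑ i, c i • r i) := by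
  intro hsing
  refine hr.not_forall_exists_mem_smul S fun s => hS _ (fun h0 => ?_) ?_
  · have := Fintype.linearIndependent_iff.1 hr ![1, s] (by simpa [Fin.sum_univ_two] using h0) 0
    simp at this
  · simpa [Fin.sum_univ_two] using isSingularPoint_sum_smul hF hrs hc hsing ![1, s]

end Lines

/-- In coordinates with `r` as `e₁, e₂, e₃`, the plane section `x₀ = 0` is `a x₁x₂x₃`; it vanishes
at `(0, c)`, so `a = 0` and `x₀` divides the cubic. -/
theorem not_irreducible_of_eval_sum_smul_eq_zero {K : Type*} [Field K]
    {F : MvPolynomial (Fin 4) K} (hF : F.IsHomogeneous 3) {r : Fin 3 → Fin 4 → K}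
    (hr : LinearIndependent K r) (hrs : ∀ i, IsSingularPoint F (r i))
    {c : Fin 3 → K} (hc : ∀ i, c i ≠ 0) (hF0 : eval (∑ i, c i • r i) F = 0) :
    ¬ Irreducible F := by
  intro hirr
  obtain ⟨w, hw⟩ := exists_linearIndependent_cons_of_lt_finrank hr (by simp)
  set M := Matrix.of (Fin.cons w r : Fin 4 → Fin 4 → K)
  have hG := hF.linSubst M
  refine hG.not_X_dvd_of_irreducible (by norm_num)
    (irreducible_linSubst hirr (Matrix.linearIndependent_rows_iff_isUnit.1 hw)) 0
    (hG.X_dvd_of_eval_eq_zero (z := Fin.cons 0 c) (fun d hd k hk => ?_) rfl (fun k hk => ?_) ?_)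
  · obtain ⟨i, rfl⟩ := Fin.exists_succ_eq.2 hk
    by_contra hlt
    refine hd (hG.coeff_eq_zero_of_isSingularPoint_piSingle (k := i.succ) ?_ (by omega))
    exact IsSingularPoint.linSubst (by rw [Matrix.single_one_vecMul]; exact hrs i)
  · obtain ⟨i, rfl⟩ := Fin.exists_succ_eq.2 hk
    exact hc i
  · rw [eval_linSubst, Matrix.vecMul_of, Fin.sum_univ_succ]
    simpa using hF0

theorem not_irreducible_of_isSingularPoint_sum_smul {K : Type*} [Field K]
    {F : MvPolynomial (Fin 4) K} (hF : F.IsHomogeneous 3) {r : Fin 4 → Fin 4 → K}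
    (hr : LinearIndependent K (r ∘ Fin.succ)) (hrs : ∀ i, IsSingularPoint F (r i))
    {c : Fin 4 → K} (hc : ∀ i, c i ≠ 0) (hsing : IsSingularPoint F (∑ i, c i • r i)) :
    ¬ Irreducible F := by
  refine not_irreducible_of_eval_sum_smul_eq_zero hF hr (fun _ => hrs _) (fun i => hc i.succ) ?_
  have hline := eval_sum_smul_eq_zero hF (r := ![r 0, ∑ i, c i • r i])
    (fun i => by fin_cases i; exacts [hrs 0, hsing]) ![-c 0, 1]
  convert hline using 2
  simp [Fin.sum_univ_succ]

end MvPolynomial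

/-- A normal cubic surface in `ℙ³` over an algebraically closed field has at most 4 singular
points: there cannot exist 5 pairwise distinct (as points of `ℙ³`) singular points. -/
theorem normal_cubic_at_most_four_singular_points
    (K : Type*) [Field K] [IsAlgClosed K]
    (F : MvPolynomial (Fin 4) K) (hhom : F.IsHomogeneous 3) (hirr : Irreducible F)
    (hnormal : ∃ S : Finset (Fin 4 → K),
      ∀ v : Fin 4 → K, v ≠ 0 → eval v F = 0 → (∀ i, eval v (pderiv i F) = 0) →
        ∃ w ∈ S, ∃ c : K, v = c • w)
    (p : Fin 5 → (Fin 4 → K)) (hp0 : ∀ i, p i ≠ 0)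
    (hsing : ∀ i, eval (p i) F = 0 ∧ ∀ j, eval (p i) (pderiv j F) = 0)
    (hdist : ∀ i j, i ≠ j → ¬ ∃ c : K, p i = c • p j) :
    False := by
  obtain ⟨S, hS⟩ := hnormal
  have hindep2 : ∀ f : Fin 2 → Fin 5, f.Injective → LinearIndependent K (p ∘ f) := by
    intro f hf
    by_contra hdep
    obtain ⟨c, -, hc⟩ := exists_forall_ne_zero_eq_sum_smul (u := p ∘ f)
      (fun _ _ => linearIndependent_unique_iff.2 (hp0 _)) hdep
    exact hdist (f 1) (f 0) (hf.ne (by decide)) ⟨c 0, by simpa using hc⟩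
  have hindep3 : ∀ f : Fin 3 → Fin 5, f.Injective → LinearIndependent K (p ∘ f) := by
    intro f hf
    by_contra hdep
    obtain ⟨c, hc, hsum⟩ := exists_forall_ne_zero_eq_sum_smul (u := p ∘ f)
      (fun g hg => hindep2 _ (hf.comp hg)) hdep
    exact not_isSingularPoint_sum_smul hhom (fun v hv h => hS v hv h.1 h.2)
      (hindep2 _ (hf.comp (Fin.castSucc_injective 2))) (fun _ => hsing _) hc
      (hsum ▸ hsing (f 2))
  have hindep4 : ∀ f : Fin 4 → Fin 5, f.Injective → LinearIndependent K (p ∘ f) := by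
    intro f hf
    by_contra hdep
    obtain ⟨c, hc, hsum⟩ := exists_forall_ne_zero_eq_sum_smul (u := p ∘ f)
      (fun g hg => hindep3 _ (hf.comp hg)) hdep
    exact not_irreducible_of_eval_sum_smul_eq_zero hhom
      (hindep3 _ (hf.comp (Fin.castSucc_injective 3))) (fun _ => hsing _) hc
      (hsum ▸ (hsing (f 3)).1) hirr
  obtain ⟨c, hc, hsum⟩ := exists_forall_ne_zero_eq_sum_smul (u := p) hindep4
    fun h => by simpa using h.fintype_card_le_finrank
  exact not_irreducible_of_isSingularPoint_sum_smul hhom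
    (hindep3 _ ((Fin.castSucc_injective 4).comp (Fin.succ_injective 3))) (fun _ => hsing _) hc
    (hsum ▸ hsing 4) hirr
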